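/- arXiv:2002.06764 — 6 statements merged into one kernel-verified Lean document; each statement's English description precedes it below -/
import Mathlib

section
/- Let ≈ be an SCER and T a string of length n. For any 1 < i ≤ n, the ≈-border array satisfies Border_T[i−1] + 1 ≥ Border_T[i]. -/
variable {α : Type*}

/-- `substr X i j` is the 1-indexed inclusive substring `X[i:j]`. -/
def substr (X : List α) (i j : ℕ) : List α := (X.take j).drop (i - 1)

/-- A substring consistent equivalence relation (SCER). -/
structure SCER (r : List α → List α → Prop) : Prop where
  equiv : Equivalence r
  length_eq : ∀ X Y, r X Y → X.length = Y.length
  substr_congr : ∀ X Y, r X Y → ∀ i j, 1 ≤ i → i ≤ j → j ≤ X.length →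
    r (substr X i j) (substr Y i j)

/-- `B` is a `≈`-border of `T`: `B` is equivalent to a prefix and a suffix of `T`. -/
def IsBorder (r : List α → List α → Prop) (B T : List α) : Prop :=
  B.length ≤ T.length ∧ r B (T.take B.length) ∧ r B (T.drop (T.length - B.length))

/-- `C` is a `≈`-cover of `T`: there are occurrences `x 1 = 1 < ... < x m = |T|-|C|+1`
with consecutive gaps at most `|C|`. -/
def IsCover (r : List α → List α → Prop) (C T : List α) : Prop :=
  ∃ (m : ℕ) (x : ℕ → ℕ), 1 ≤ m ∧ x 1 = 1 ∧ x m = T.length - C.length + 1 ∧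
    (∀ k, 1 ≤ k → k ≤ m → r C (substr T (x k) (x k + C.length - 1))) ∧
    (∀ k, 1 < k → k ≤ m → x (k - 1) < x k ∧ x k ≤ x (k - 1) + C.length)

def IsProperCover (r : List α → List α → Prop) (C T : List α) : Prop :=
  IsCover r C T ∧ C.length < T.length

/-- A string is primitive if it has no proper `≈`-cover. -/
def Primitive (r : List α → List α → Prop) (T : List α) : Prop :=
  ¬ ∃ C : List α, IsProperCover r C T

/-- `S` is a left `≈`-seed of `T`. -/
def IsLeftSeed (r : List α → List α → Prop) (S T : List α) : Prop :=
  ∃ k l, k ≤ l ∧ l < S.length ∧ IsCover r S (T.take (T.length - k)) ∧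
    r (S.take l) (T.drop (T.length - l))

/-- `Bd` is the `≈`-border array of `T`:
`Bd i` is the maximum length of a proper `≈`-border of `T[1:i]`. -/
def BorderArr (r : List α → List α → Prop) (T : List α) (Bd : ℕ → ℕ) : Prop :=
  ∀ i, 1 ≤ i → i ≤ T.length →
    IsGreatest {b | ∃ B : List α, B.length = b ∧ b < i ∧ IsBorder r B (T.take i)} (Bd i)

/-- `L` is the longest `≈`-cover array of `T`:
`L i = max({|C| : C proper ≈-cover of T[1:i]} ∪ {0})`. -/
def LCoverArr (r : List α → List α → Prop) (T : List α) (L : ℕ → ℕ) : Prop :=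
  ∀ i, 1 ≤ i → i ≤ T.length →
    IsGreatest (insert 0 {c | ∃ C : List α, C.length = c ∧ IsProperCover r C (T.take i)})
      (L i)

/-! Dropping the last letter of a proper `≈`-border of `T[1:i]` gives a proper `≈`-border of
`T[1:i-1]`: an SCER relates the length-`k` prefixes of related strings, so both the prefix and
the suffix occurrence of the border survive the truncation. -/

theorem List.dropLast_take_of_le_length {l : List α} {i : ℕ} (h : i ≤ l.length) :
    (l.take i).dropLast = l.take (i - 1) := by
  simp [List.dropLast_eq_take, List.take_take, Nat.min_eq_left h]

section

variable {r : List α → List α → Prop}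

theorem SCER.take_congr (hr : SCER r) {X Y : List α} (hXY : r X Y) (k : ℕ) :
    r (X.take k) (Y.take k) := by
  rcases Nat.eq_zero_or_pos k with rfl | hk
  · simpa using hr.equiv.refl []
  by_cases hkX : k ≤ X.length
  · simpa [substr] using hr.substr_congr X Y hXY 1 k le_rfl hk hkX
  · rwa [List.take_of_length_le (by omega),
      List.take_of_length_le (by rw [← hr.length_eq X Y hXY]; omega)]

theorem SCER.dropLast_congr (hr : SCER r) {X Y : List α} (hXY : r X Y) :
    r X.dropLast Y.dropLast := by
  simpa only [List.dropLast_eq_take, hr.length_eq X Y hXY] using hr.take_congr hXY (Y.length - 1)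

theorem isBorder_nil (hr : SCER r) (T : List α) : IsBorder r [] T := by
  simpa [IsBorder] using hr.equiv.refl []

theorem IsBorder.dropLast (hr : SCER r) {B T : List α} (hB : IsBorder r B T) :
    IsBorder r B.dropLast T.dropLast := by
  rcases eq_or_ne B [] with rfl | hne
  · exact isBorder_nil hr _
  obtain ⟨hlen, hpre, hsuf⟩ := hB
  have hpos : 0 < B.length := List.length_pos_iff.mpr hne
  refine ⟨by simp only [List.length_dropLast]; omega, ?_, ?_⟩
  · simpa only [List.length_dropLast, List.dropLast_take_eq_take_dropLast]
      using hr.dropLast_congr hpre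
  · have hshift : T.dropLast.length - B.dropLast.length = T.length - B.length := by
      simp only [List.length_dropLast]; omega
    simpa only [hshift, List.dropLast_drop_eq_drop_dropLast] using hr.dropLast_congr hsuf

end

theorem stmt5 (r : List α → List α → Prop) (h : SCER r) (T : List α) (Bd : ℕ → ℕ)
    (hB : BorderArr r T Bd) (i : ℕ) (h1 : 1 < i) (h2 : i ≤ T.length) :
    Bd i ≤ Bd (i - 1) + 1 := by
  obtain ⟨⟨B, hBlen, hBi, hBorder⟩, -⟩ := hB i (by omega) h2
  have hshort : IsBorder r B.dropLast (T.take (i - 1)) := by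
    simpa only [List.dropLast_take_of_le_length h2] using hBorder.dropLast h
  have hle : B.dropLast.length ≤ Bd (i - 1) :=
    (hB (i - 1) (by omega) (by omega)).2
      ⟨B.dropLast, rfl, by rw [List.length_dropLast]; omega, hshort⟩
  rw [List.length_dropLast] at hle
  omega
end

section
/- Let ≈ be an SCER. If C is a ≈-cover of T, B is a ≈-border of T, and |C| ≤ |B|, then C is a ≈-cover of B. -/
variable {α : Type*}

/-! Through the prefix equivalence, every occurrence of `C` in `T` ending within the first
`|B|` positions is an occurrence in `B`; through the suffix equivalence, the last occurrence of
`C` in `T` gives one of `B` at `p = |B| - |C| + 1`. Keep the occurrences of the cover of `T`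
before `p` and append `p`: the occurrence of the cover following the last kept one lies at or
beyond `p`, so the new final gap is at most `|C|`. -/

theorem substr_take_of_le (X : List α) {i j b : ℕ} (hjb : j ≤ b) :
    substr (X.take b) i j = substr X i j := by
  simp [substr, List.take_take, min_eq_left hjb]

theorem substr_drop (X : List α) {i j d : ℕ} (hi : 1 ≤ i) :
    substr (X.drop d) i j = substr X (i + d) (j + d) := by
  simp only [substr, List.take_drop, List.drop_drop]
  rw [Nat.add_comm d j, show d + (i - 1) = i + d - 1 by omega]

section Occurrence

variable {r : List α → List α → Prop} {C X Y : List α} {q : ℕ}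

def IsOcc (r : List α → List α → Prop) (C X : List α) (q : ℕ) : Prop :=
  r C (substr X q (q + C.length - 1))

theorem isOcc_take {b : ℕ} (hqb : q + C.length - 1 ≤ b) :
    IsOcc r C (X.take b) q ↔ IsOcc r C X q := by
  rw [IsOcc, IsOcc, substr_take_of_le X hqb]

theorem isOcc_drop {d : ℕ} (hq : 1 ≤ q) : IsOcc r C (X.drop d) q ↔ IsOcc r C X (q + d) := by
  rw [IsOcc, IsOcc, substr_drop X hq, show q + C.length - 1 + d = q + d + C.length - 1 by omega]

theorem SCER.isOcc_of_rel (h : SCER r) (hXY : r X Y) (hq : 1 ≤ q)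
    (hqX : q + C.length - 1 ≤ X.length) (hC : IsOcc r C X q) : IsOcc r C Y q := by
  rcases Nat.eq_zero_or_pos C.length with hc | hc
  · have hnil : ∀ Z : List α, substr Z q (q + C.length - 1) = [] := fun Z =>
      List.drop_eq_nil_of_le (by simp only [List.length_take]; omega)
    rwa [IsOcc, hnil] at hC ⊢
  · exact h.equiv.trans hC (h.substr_congr X Y hXY _ _ hq (by omega) hqX)

variable {B T : List α}

theorem SCER.isOcc_of_isOcc_prefix (h : SCER r) (hB : IsBorder r B T) (hq : 1 ≤ q)
    (hqB : q + C.length - 1 ≤ B.length) (hT : IsOcc r C T q) : IsOcc r C B q :=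
  h.isOcc_of_rel (h.equiv.symm hB.2.1) hq (by have := hB.1; simp only [List.length_take]; omega)
    ((isOcc_take hqB).2 hT)

theorem SCER.isOcc_of_isOcc_suffix (h : SCER r) (hB : IsBorder r B T) (hq : 1 ≤ q)
    (hqB : q + C.length - 1 ≤ B.length) (hT : IsOcc r C T (q + (T.length - B.length))) :
    IsOcc r C B q :=
  h.isOcc_of_rel (h.equiv.symm hB.2.2) hq (by have := hB.1; simp only [List.length_drop]; omega)
    ((isOcc_drop hq).2 hT)

end Occurrence

section GapChain

def IsGapChain (c : ℕ) (S : ℕ → Prop) (N : ℕ) : Prop :=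
  ∃ (m : ℕ) (x : ℕ → ℕ), 1 ≤ m ∧ x 1 = 1 ∧ x m = N ∧ (∀ k, 1 ≤ k → k ≤ m → S (x k)) ∧
    (∀ k, 1 < k → k ≤ m → x (k - 1) < x k ∧ x k ≤ x (k - 1) + c)

theorem isCover_iff_isGapChain {r : List α → List α → Prop} {C T : List α} :
    IsCover r C T ↔ IsGapChain C.length (IsOcc r C T) (T.length - C.length + 1) :=
  Iff.rfl

variable {c N p : ℕ} {S S' : ℕ → Prop}

theorem IsGapChain.single (h : S 1) : IsGapChain c S 1 :=
  ⟨1, fun _ => 1, le_rfl, rfl, rfl, fun _ _ _ => h, fun _ _ _ => by omega⟩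

theorem IsGapChain.snoc (h : IsGapChain c S N) (hNp : N < p) (hpN : p ≤ N + c) (hp : S p) :
    IsGapChain c S p := by
  obtain ⟨m, x, hm, hx1, hxm, hS, hgap⟩ := h
  refine ⟨m + 1, Function.update x (m + 1) p, by omega, ?_, by simp, ?_, ?_⟩
  · rwa [Function.update_of_ne (by omega)]
  · intro k hk hkm
    rcases Nat.lt_or_ge k (m + 1) with hlt | hge
    · rw [Function.update_of_ne (by omega)]
      exact hS k hk (by omega)
    · rwa [show k = m + 1 by omega, Function.update_self]
  · intro k hk hkm
    rw [Function.update_of_ne (show k - 1 ≠ m + 1 by omega)]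
    rcases Nat.lt_or_ge k (m + 1) with hlt | hge
    · rw [Function.update_of_ne (by omega)]
      exact hgap k hk (by omega)
    · rw [show k = m + 1 by omega, Function.update_self, Nat.add_sub_cancel, hxm]
      exact ⟨hNp, hpN⟩

theorem IsGapChain.prop_end (h : IsGapChain c S N) : S N := by
  obtain ⟨m, x, hm, -, hxm, hS, -⟩ := h
  exact hxm ▸ hS m hm le_rfl

theorem IsGapChain.eq_one_or_exists_prev (h : IsGapChain c S N) :
    N = 1 ∨ ∃ N', IsGapChain c S N' ∧ N' < N ∧ N ≤ N' + c := by
  obtain ⟨m, x, hm, hx1, hxm, hS, hgap⟩ := h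
  rcases Nat.lt_or_ge 1 m with hm1 | hm1
  · refine Or.inr ⟨x (m - 1), ⟨m - 1, x, by omega, hx1, rfl, fun k hk hkm => hS k hk (by omega),
      fun k hk hkm => hgap k hk (by omega)⟩, hxm ▸ hgap m hm1 le_rfl⟩
  · exact Or.inl (by rw [← hxm, show m = 1 by omega, hx1])

theorem IsGapChain.one_le (h : IsGapChain c S N) : 1 ≤ N := by
  rcases h.eq_one_or_exists_prev with h1 | ⟨N', -, hlt, -⟩ <;> omega

theorem IsGapChain.truncate (h : IsGapChain c S N) (hp : 1 ≤ p) (hpN : p ≤ N)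
    (hSS' : ∀ q, 1 ≤ q → q < p → S q → S' q) (hS'p : S' p) : IsGapChain c S' p := by
  induction N using Nat.strong_induction_on generalizing p with
  | _ N ih =>
  rcases h.eq_one_or_exists_prev with rfl | ⟨N', hN', hlt, hle⟩
  · obtain rfl : p = 1 := by omega
    exact .single hS'p
  · rcases Nat.lt_or_ge N' p with hN'p | hpN'
    · have hN'1 := hN'.one_le
      exact (ih N' hlt hN' hN'1 le_rfl (fun q hq hqN' hSq => hSS' q hq (by omega) hSq)
        (hSS' N' hN'1 hN'p hN'.prop_end)).snoc hN'p (by omega) hS'p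
    · exact ih N' hlt hN' hp hpN' hSS' hS'p

end GapChain

theorem stmt6 (r : List α → List α → Prop) (h : SCER r) (T C B : List α)
    (hC : IsCover r C T) (hB : IsBorder r B T) (hlen : C.length ≤ B.length) :
    IsCover r C B := by
  rw [isCover_iff_isGapChain] at hC ⊢
  have hBT := hB.1
  have hlast : IsOcc r C B (B.length - C.length + 1) := by
    refine h.isOcc_of_isOcc_suffix hB (by omega) (by omega) ?_
    rw [show B.length - C.length + 1 + (T.length - B.length) = T.length - C.length + 1 by omega]
    exact hC.prop_end
  exact hC.truncate (by omega) (by omega)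
    (fun q hq hqp hocc => h.isOcc_of_isOcc_prefix hB hq (by omega) hocc) hlast
end

section
/- Let ≈ be an SCER. If C and C' are both ≈-covers of T with |C| ≤ |C'|, then C is a ≈-cover of C'. -/
variable {α : Type*}

/-
Both covers are ≈-borders of `T`, so `C'` is ≈-equivalent to the prefix and to the suffix of `T`
of length `|C'|`. By substring consistency, every occurrence of `C` in `T` inside the suffix
window `(s, |T|]`, `s = |T| - |C'|`, is an occurrence in `C'` shifted by `s`, and the occurrence
of `C` at position `1` of `T` is one at position `1` of `C'`. The occurrences of the cover of `T`
past `s` keep gaps at most `|C|`, end at `|C'| - |C| + 1`, and the first of them starts at most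
`|C|` positions after `s`, so together with position `1` they form a cover of `C'`.
-/

section Covers

variable {r : List α → List α → Prop} {C W T : List α}

def OccursAt (r : List α → List α → Prop) (C T : List α) (p : ℕ) : Prop :=
  r C (substr T p (p + C.length - 1))

def CoversFrom (r : List α → List α → Prop) (C T : List α) (p : ℕ) : Prop :=
  ∃ (m : ℕ) (x : ℕ → ℕ), 1 ≤ m ∧ x 1 = p ∧ x m = T.length - C.length + 1 ∧
    (∀ k, 1 ≤ k → k ≤ m → OccursAt r C T (x k)) ∧
    (∀ k, 1 < k → k ≤ m → x (k - 1) < x k ∧ x k ≤ x (k - 1) + C.length)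

theorem isCover_iff_coversFrom_one : IsCover r C T ↔ CoversFrom r C T 1 := Iff.rfl

theorem substr_substr (T : List α) {s w i j : ℕ} (hi : 1 ≤ i) (hj : j ≤ w) :
    substr (substr T (s + 1) (s + w)) i j = substr T (s + i) (s + j) := by
  simp only [substr, Nat.add_sub_cancel, List.take_drop, List.take_take, List.drop_drop]
  rw [Nat.min_eq_left (by omega), Nat.add_sub_assoc hi]

theorem OccursAt.add_length_le (h : SCER r) {p : ℕ} (hC : OccursAt r C T p)
    (hc : 0 < C.length) : p + C.length ≤ T.length + 1 := by
  have := h.length_eq _ _ hC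
  simp only [substr, List.length_drop, List.length_take] at this
  omega

theorem OccursAt.of_nested (h : SCER r) {s i : ℕ} (hW : OccursAt r W T (s + 1))
    (hC : OccursAt r C T (s + i)) (hi : 1 ≤ i) (hc : 0 < C.length)
    (hfit : i + C.length ≤ W.length + 1) : OccursAt r C W i := by
  unfold OccursAt at *
  rw [show s + 1 + W.length - 1 = s + W.length by omega] at hW
  have hsub := h.substr_congr _ _ hW i (i + C.length - 1) hi (by omega) (by omega)
  rw [substr_substr T hi (by omega), show s + (i + C.length - 1) = s + i + C.length - 1 by omega]
    at hsub
  exact h.equiv.trans hC (h.equiv.symm hsub)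

theorem coversFrom_last (hC : OccursAt r C T (T.length - C.length + 1)) :
    CoversFrom r C T (T.length - C.length + 1) :=
  ⟨1, fun _ => T.length - C.length + 1, le_rfl, rfl, rfl, fun _ _ _ => hC,
    fun _ _ hk1 => absurd hk1 (by omega)⟩

theorem CoversFrom.cons {p q : ℕ} (hq : CoversFrom r C T q) (hp : OccursAt r C T p)
    (hpq : p < q) (hqp : q ≤ p + C.length) : CoversFrom r C T p := by
  obtain ⟨m, x, hm, hx1, hxm, hocc, hgap⟩ := hq
  refine ⟨m + 1, fun k => if k = 1 then p else x (k - 1), by omega, by simp, ?_, ?_, ?_⟩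
  · simpa [show m ≠ 0 by omega] using hxm
  · intro k hk hkm
    by_cases hk1 : k = 1
    · simpa [hk1] using hp
    · simpa [hk1] using hocc (k - 1) (by omega) (by omega)
  · intro k hk hkm
    by_cases hk2 : k = 2
    · subst hk2; simpa [hx1] using ⟨hpq, hqp⟩
    · simpa [show k ≠ 1 by omega, show k - 1 ≠ 1 by omega]
        using hgap (k - 1) (by omega) (by omega)

theorem CoversFrom.isCover {q : ℕ} (hq : CoversFrom r C T q) (hq1 : 1 ≤ q)
    (hqc : q ≤ C.length + 1) (hC : OccursAt r C T 1) : IsCover r C T := by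
  rcases hq1.eq_or_lt with rfl | hq1
  · exact isCover_iff_coversFrom_one.2 hq
  · exact isCover_iff_coversFrom_one.2 (hq.cons hC hq1 (by omega))

theorem IsCover.occursAt_one (hC : IsCover r C T) : OccursAt r C T 1 := by
  obtain ⟨m, x, hm, hx1, -, hocc, -⟩ := hC
  exact hx1 ▸ hocc 1 le_rfl hm

theorem IsCover.occursAt_last (hC : IsCover r C T) :
    OccursAt r C T (T.length - C.length + 1) := by
  obtain ⟨m, x, hm, -, hxm, hocc, -⟩ := hC
  exact hxm ▸ hocc m hm le_rfl

theorem IsCover.length_le (h : SCER r) (hC : IsCover r C T) : C.length ≤ T.length := by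
  have := h.length_eq _ _ hC.occursAt_one
  simp only [substr, List.length_drop, List.length_take] at this
  omega

theorem IsCover.eq_nil_of_length_eq_zero (hC : IsCover r C T) (hc : C.length = 0) :
    T = [] := by
  obtain ⟨m, x, hm, hx1, hxm, -, hgap⟩ := hC
  rcases hm.eq_or_lt with rfl | hm
  · exact List.eq_nil_of_length_eq_zero (by omega)
  · have := hgap m hm le_rfl
    omega

theorem isCover_refl (h : SCER r) (C : List α) : IsCover r C C :=
  ⟨1, fun _ => 1, le_rfl, rfl, by simp, fun _ _ _ => by simpa [substr] using h.equiv.refl C,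
    fun _ hk hk1 => absurd hk1 (by omega)⟩

theorem IsCover.exists_coversFrom_of_suffix (h : SCER r) (hC : IsCover r C T)
    (hc : 0 < C.length) (hCW : C.length ≤ W.length)
    (hW : OccursAt r W T (T.length - W.length + 1)) :
    ∃ q, 1 ≤ q ∧ q ≤ C.length + 1 ∧ CoversFrom r C W q := by
  obtain ⟨m, x, hm, hx1, hxm, hocc, hgap⟩ := hC
  have hWT : W.length ≤ T.length := by have := hW.add_length_le h (by omega); omega
  set s := T.length - W.length
  have hoccW : ∀ k, 1 ≤ k → k ≤ m → s < x k → OccursAt r C W (x k - s) := by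
    intro k hk hkm hs
    have hfit := OccursAt.add_length_le h (hocc k hk hkm) hc
    exact hW.of_nested h (by rw [Nat.add_sub_cancel' hs.le]; exact hocc k hk hkm) (by omega) hc
      (by omega)
  have hcoversFrom : ∀ k, 1 ≤ k → k ≤ m → s < x k → CoversFrom r C W (x k - s) := by
    intro k hk hkm
    induction hkm using Nat.decreasingInduction with
    | self =>
      intro hs
      have e : x m - s = W.length - C.length + 1 := by omega
      exact e ▸ coversFrom_last (e ▸ hoccW m hm le_rfl hs)
    | of_succ k hkm ih =>
      intro hs
      have := hgap (k + 1) (by omega) hkm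
      simp only [Nat.add_sub_cancel] at this
      exact (ih (by omega) (by omega)).cons (hoccW k hk hkm.le hs) (by omega) (by omega)
  have hcoversFrom_start : ∀ k, 1 ≤ k → k ≤ m → x k ≤ s + C.length →
      ∃ q, 1 ≤ q ∧ q ≤ C.length + 1 ∧ CoversFrom r C W q := by
    -- the first occurrence starting after `s` starts at most `|C|` positions after `s`
    intro k hk hkm
    induction hkm using Nat.decreasingInduction with
    | self => intro _; exact ⟨x m - s, by omega, by omega, hcoversFrom m hm le_rfl (by omega)⟩
    | of_succ k hkm ih =>
      intro hxk
      by_cases hs : s < x k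
      · exact ⟨x k - s, by omega, by omega, hcoversFrom k hk hkm.le hs⟩
      · have := hgap (k + 1) (by omega) hkm
        simp only [Nat.add_sub_cancel] at this
        exact ih (by omega) (by omega)
  exact hcoversFrom_start 1 le_rfl hm (by omega)

end Covers

theorem stmt7 (r : List α → List α → Prop) (h : SCER r) (T C C' : List α)
    (hC : IsCover r C T) (hC' : IsCover r C' T) (hlen : C.length ≤ C'.length) :
    IsCover r C C' := by
  rcases Nat.eq_zero_or_pos C.length with hc | hc
  · have hT := hC.eq_nil_of_length_eq_zero hc
    have hC'0 : C'.length = 0 := by simpa [hT] using hC'.length_le h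
    rw [List.eq_nil_of_length_eq_zero hc, List.eq_nil_of_length_eq_zero hC'0]
    exact isCover_refl h []
  obtain ⟨q, hq1, hqc, hq⟩ := hC.exists_coversFrom_of_suffix h hc hlen hC'.occursAt_last
  exact hq.isCover hq1 hqc (hC'.occursAt_one.of_nested (s := 0) h (by simpa using hC.occursAt_one)
    le_rfl hc (by omega))
end

section
/- Let ≈ be an SCER. A string C of length c is a proper ≈-cover of T of length n if and only if C is a ≈-border of T and C is a ≈-cover of T[1:n−i] for some 1 ≤ i ≤ c. -/
variable {α : Type*}

lemma substr_take_of_le_s11 (T : List α) {i j t : ℕ} (hj : j ≤ t) :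
    substr (T.take t) i j = substr T i j := by
  simp [substr, List.take_take, Nat.min_eq_left hj]

lemma substr_one (T : List α) (c : ℕ) : substr T 1 (1 + c - 1) = T.take c := by
  simp [substr]

lemma substr_last (T : List α) {c : ℕ} (hc : c ≤ T.length) :
    substr T (T.length - c + 1) (T.length - c + 1 + c - 1) = T.drop (T.length - c) := by
  simp [substr, show T.length - c + 1 + c - 1 = T.length by omega]

lemma monotoneOn_Icc_of_lt_pred {x : ℕ → ℕ} {m : ℕ}
    (hx : ∀ k, 1 < k → k ≤ m → x (k - 1) < x k) : MonotoneOn x (Set.Icc 1 m) :=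
  (strictMonoOn_of_lt_add_one Set.ordConnected_Icc fun k _ hk hk' ↦ by
    simpa using hx (k + 1) (by have := hk.1; omega) hk'.2).monotoneOn

namespace IsCover

variable {r : List α → List α → Prop} {C T : List α}

lemma length_le_s11 (h : SCER r) (hC : IsCover r C T) : C.length ≤ T.length := by
  obtain ⟨m, x, hm, hx1, -, hocc, -⟩ := hC
  have := h.length_eq _ _ (hocc 1 le_rfl hm)
  rw [hx1, substr_one, List.length_take] at this
  omega

lemma isBorder (hC : IsCover r C T) (hle : C.length ≤ T.length) : IsBorder r C T := by
  obtain ⟨m, x, hm, hx1, hxm, hocc, -⟩ := hC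
  refine ⟨hle, ?_, ?_⟩
  · have := hocc 1 le_rfl hm
    rwa [hx1, substr_one] at this
  · rw [← substr_last T hle, ← hxm]
    exact hocc m hm le_rfl

/-- Dropping the last occurrence of a proper cover leaves a cover of the prefix ending with the
second-to-last occurrence, which is shorter by at least one and at most `|C|` letters. -/
lemma exists_take (hC : IsCover r C T) (hlt : C.length < T.length) :
    ∃ i, 1 ≤ i ∧ i ≤ C.length ∧ IsCover r C (T.take (T.length - i)) := by
  obtain ⟨m, x, hm, hx1, hxm, hocc, hgap⟩ := hC
  have hm2 : 2 ≤ m := by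
    by_contra
    obtain rfl : m = 1 := by omega
    omega
  have hmono := monotoneOn_Icc_of_lt_pred fun k hk hkm ↦ (hgap k hk hkm).1
  have hx_le : ∀ k, 1 ≤ k → k ≤ m - 1 → x k ≤ x (m - 1) := fun k hk hkm ↦
    hmono ⟨hk, by omega⟩ ⟨by omega, by omega⟩ hkm
  have hpos : 1 ≤ x (m - 1) := by have := hx_le 1 le_rfl (by omega); omega
  obtain ⟨hlast_lt, hlast_le⟩ := hgap m (by omega) le_rfl
  set e := x (m - 1) + C.length - 1
  have he : T.length - (T.length - e) = e := by omega
  refine ⟨T.length - e, by omega, by omega, m - 1, x, by omega, hx1, ?_, ?_, ?_⟩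
  · rw [he, List.length_take]
    omega
  · intro k hk hkm
    rw [he, substr_take_of_le_s11 T (by have := hx_le k hk hkm; omega)]
    exact hocc k hk (by omega)
  · exact fun k hk hkm ↦ hgap k hk (by omega)

lemma of_take {t : ℕ} (hC : IsCover r C (T.take t)) (hct : C.length ≤ t) (ht : t < T.length)
    (hgap : T.length ≤ t + C.length) (hsuf : r C (T.drop (T.length - C.length))) :
    IsCover r C T := by
  obtain ⟨m, x, hm, hx1, hxm, hocc, hgaps⟩ := hC
  rw [List.length_take, min_eq_left ht.le] at hxm
  have hmono := monotoneOn_Icc_of_lt_pred fun k hk hkm ↦ (hgaps k hk hkm).1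
  refine ⟨m + 1, fun k ↦ if k ≤ m then x k else T.length - C.length + 1, by omega,
    by simp [hm, hx1], by simp, ?_, ?_⟩
  · intro k hk hkm
    by_cases hk' : k ≤ m
    · have : x k ≤ x m := hmono ⟨hk, hk'⟩ ⟨hm, le_rfl⟩ hk'
      simp only [hk', if_true]
      rw [← substr_take_of_le_s11 T (t := t) (by omega)]
      exact hocc k hk hk'
    · simp only [hk', if_false]
      rw [substr_last T (hct.trans ht.le)]
      exact hsuf
  · intro k hk hkm
    by_cases hk' : k ≤ m
    · simpa [hk', show k - 1 ≤ m by omega] using hgaps k hk hk'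
    · obtain rfl : k = m + 1 := by omega
      simp only [Nat.add_sub_cancel, le_refl, if_true, show ¬ m + 1 ≤ m by omega, if_false, hxm]
      omega

end IsCover

theorem stmt11 (r : List α → List α → Prop) (h : SCER r) (T C : List α) :
    IsProperCover r C T ↔
      (IsBorder r C T ∧
        ∃ i, 1 ≤ i ∧ i ≤ C.length ∧ IsCover r C (T.take (T.length - i))) := by
  constructor
  · rintro ⟨hC, hlt⟩
    exact ⟨hC.isBorder hlt.le, hC.exists_take hlt⟩
  · rintro ⟨hB, i, hi, hic, hC⟩
    have hct := hC.length_le_s11 h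
    rw [List.length_take] at hct
    have hcn := hB.1
    exact ⟨hC.of_take (by omega) (by omega) (by omega) hB.2.2, by omega⟩
end

section
/- Let ≈ be an SCER and T a string. For any 1 ≤ i ≤ n and any j with i − Border_T[i] ≤ j ≤ i, the prefix T[1:j] is a left ≈-seed of T[1:i] (all sufficiently long prefixes are left ≈-seeds). -/
variable {α : Type*}

/-!
A proper `≈`-border of length `b` of `U = T[1:i]` makes `p = i - b` a `≈`-period of `U`:
`U[1:i-p] ≈ U[p+1:i]`. Iterating the shift by `p` (which the SCER axioms allow on every
substring), the prefix `S = U[1:j]` with `j ≥ p` reoccurs at the positions `1, 1 + p, …`.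
Writing `i - j = t p + k` with `k < p`, these occurrences cover `U[1:i-k]`, and the
remaining suffix of `U`, of length `j - p + k < j`, is `≈` to the prefix of `S` of that length.
-/

def IsPeriod (r : List α → List α → Prop) (p : ℕ) (T : List α) : Prop :=
  r (T.take (T.length - p)) (T.drop p)

section Substr

variable (X : List α)

theorem substr_one_s14 (c : ℕ) : substr X 1 c = X.take c := by
  simp [substr]

theorem substr_length (a : ℕ) : substr X a X.length = X.drop (a - 1) := by
  simp [substr]

theorem substr_take_of_le_s14 {a c m : ℕ} (hc : c ≤ m) : substr (X.take m) a c = substr X a c := by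
  simp [substr, List.take_take, Nat.min_eq_left hc]

theorem substr_drop_s14 {a : ℕ} (c p : ℕ) (ha : 1 ≤ a) :
    substr (X.drop p) a c = substr X (a + p) (c + p) := by
  simp only [substr, List.drop_take, List.drop_drop]
  rw [show c + p - (a + p - 1) = c - (a - 1) by omega, show a + p - 1 = p + (a - 1) by omega]

end Substr

namespace SCER

variable {r : List α → List α → Prop}

/-- Unlike `SCER.substr_congr`, this allows empty substrings (`c < a`),
where both sides are `[]`. -/
theorem substr_congr' (h : SCER r) {X Y : List α} (hXY : r X Y) {a c : ℕ} (ha : 1 ≤ a)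
    (hc : c ≤ X.length) : r (substr X a c) (substr Y a c) := by
  by_cases hac : a ≤ c
  · exact h.substr_congr X Y hXY a c ha hac hc
  · have hY := h.length_eq X Y hXY
    have hempty : ∀ Z : List α, c ≤ Z.length → substr Z a c = [] := fun Z hZ => by
      simp [substr]; omega
    rw [hempty X hc, hempty Y (hY ▸ hc)]
    exact h.equiv.refl []

end SCER

section Period

variable {r : List α → List α → Prop} {T : List α} {p : ℕ}

theorem IsBorder.isPeriod (h : SCER r) {B : List α} (hB : IsBorder r B T) :
    IsPeriod r (T.length - B.length) T := by
  obtain ⟨hle, hpre, hsuf⟩ := hB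
  unfold IsPeriod
  rw [Nat.sub_sub_self hle]
  exact h.equiv.trans (h.equiv.symm hpre) hsuf

theorem IsPeriod.substr_shift (h : SCER r) (hp : IsPeriod r p T) {a c : ℕ} (ha : 1 ≤ a)
    (hc : c + p ≤ T.length) : r (substr T a c) (substr T (a + p) (c + p)) := by
  have key := h.substr_congr' hp ha (c := c) (by simp; omega)
  rwa [substr_take_of_le_s14 _ (by omega), substr_drop_s14 _ _ _ ha] at key

theorem IsPeriod.substr_shift_mul (h : SCER r) (hp : IsPeriod r p T) {a c : ℕ} (ha : 1 ≤ a) :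
    ∀ s, c + s * p ≤ T.length → r (substr T a c) (substr T (a + s * p) (c + s * p))
  | 0, _ => by simpa using h.equiv.refl _
  | s + 1, hs => by
    rw [add_one_mul] at hs ⊢
    rw [← Nat.add_assoc, ← Nat.add_assoc]
    exact h.equiv.trans (hp.substr_shift_mul h ha s (by omega))
      (hp.substr_shift h (by omega) (by omega))

theorem IsPeriod.take_equiv_drop (h : SCER r) (hp : IsPeriod r p T) {l s : ℕ}
    (hls : l + s * p = T.length) : r (T.take l) (T.drop (s * p)) := by
  have key := hp.substr_shift_mul h (a := 1) (c := l) le_rfl s hls.le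
  rwa [substr_one_s14, hls, substr_length, Nat.add_sub_cancel_left] at key

theorem IsPeriod.isCover_take (h : SCER r) (hp : IsPeriod r p T) {j t : ℕ} (hp1 : 1 ≤ p)
    (hpj : p ≤ j) (hjt : j + t * p ≤ T.length) :
    IsCover r (T.take j) (T.take (j + t * p)) := by
  have hj : (T.take j).length = j := by simp; omega
  have hjt' : (T.take (j + t * p)).length = j + t * p := by simp; omega
  refine ⟨t + 1, fun q => 1 + (q - 1) * p, by omega, by simp, ?_, ?_, ?_⟩
  · simp only [hj, hjt', Nat.add_sub_cancel]
    omega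
  · intro q _ hq
    dsimp only
    have hle : (q - 1) * p ≤ t * p := Nat.mul_le_mul_right p (by omega)
    rw [hj, substr_take_of_le_s14 _ (by omega), show 1 + (q - 1) * p + j - 1 = j + (q - 1) * p by omega,
      ← substr_one_s14]
    exact hp.substr_shift_mul h le_rfl (q - 1) (by omega)
  · intro q hq _
    obtain ⟨q', rfl⟩ : ∃ q', q = q' + 2 := ⟨q - 2, by omega⟩
    simp only [hj, Nat.add_sub_cancel, show q' + 2 - 1 = q' + 1 by omega, add_one_mul]
    omega

theorem IsPeriod.isLeftSeed_take (h : SCER r) (hp : IsPeriod r p T) {j : ℕ} (hp1 : 1 ≤ p)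
    (hpj : p ≤ j) (hjT : j ≤ T.length) : IsLeftSeed r (T.take j) T := by
  obtain ⟨t, k, hdiv, hkp⟩ : ∃ t k, t * p + k = T.length - j ∧ k < p :=
    ⟨(T.length - j) / p, (T.length - j) % p,
      by rw [Nat.mul_comm]; exact Nat.div_add_mod _ _, Nat.mod_lt _ (by omega)⟩
  refine ⟨k, j - p + k, by omega, by simp; omega, ?_, ?_⟩
  · rw [show T.length - k = j + t * p by omega]
    exact hp.isCover_take h hp1 hpj (by omega)
  · rw [List.take_take, Nat.min_eq_left (by omega),
      show T.length - (j - p + k) = (t + 1) * p by rw [add_one_mul]; omega]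
    exact hp.take_equiv_drop h (by rw [add_one_mul]; omega)

end Period

theorem stmt14 (r : List α → List α → Prop) (h : SCER r) (T : List α) (Bd : ℕ → ℕ)
    (hB : BorderArr r T Bd) (i j : ℕ) (h1 : 1 ≤ i) (h2 : i ≤ T.length)
    (h3 : i - Bd i ≤ j) (h4 : j ≤ i) :
    IsLeftSeed r (T.take j) (T.take i) := by
  obtain ⟨⟨B, hBlen, hBi, hborder⟩, -⟩ := hB i h1 h2
  have hlen : (T.take i).length = i := by simp; omega
  have hperiod := hborder.isPeriod h
  rw [hlen, hBlen] at hperiod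
  have hprefix : T.take j = (T.take i).take j := by rw [List.take_take, Nat.min_eq_left h4]
  rw [hprefix]
  exact hperiod.isLeftSeed_take h (by omega) h3 (by omega)
end

section
/- Let ≈ be an SCER and T a string of length n. If a prefix S = T[1:j] is not a left ≈-seed of T[1:i−1] for some j ≤ i−1, then S is not a left ≈-seed of T[1:i] (being a left ≈-seed is monotone: once a prefix ceases to be a left ≈-seed of a prefix of T, it is not a left ≈-seed of any longer prefix). -/
variable {α : Type*}

/-!
Let `S` be a left seed of `U`, witnessed by `k ≤ l < |S|`. If `k ≥ 1`, the witnesses `k - 1` and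
`l - 1` work for `U.dropLast`: the cover is unchanged, and the match of `S[1:l]` with the suffix
of length `l` of `U` restricts to a match of `S[1:l-1]` with the suffix of length `l - 1` of
`U.dropLast`. If `k = 0`, `S` covers all of `U`, and since `|S| < |U|` the cover has at least two
occurrences. Removing the last one leaves a cover of a prefix `U[1:q]` with `|U| ≤ q + |S|`, and
the last occurrence, a suffix of `U`, gives the match of `S[1:|S|-1]` with the suffix of
`U.dropLast`; so `k = |U| - 1 - q` and `l = |S| - 1` work.
-/

lemma substr_take_of_le_s19 (X : List α) {a p q : ℕ} (hq : q ≤ a) :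
    substr (X.take a) p q = substr X p q := by
  simp [substr, List.take_take, Nat.min_eq_left hq]

lemma le_of_forall_pred_lt {x : ℕ → ℕ} {m : ℕ} (hx : ∀ k, 1 < k → k ≤ m → x (k - 1) < x k)
    {a b : ℕ} (ha : 1 ≤ a) (hab : a ≤ b) (hb : b ≤ m) : x a ≤ x b := by
  induction b, hab using Nat.le_induction with
  | base => exact le_rfl
  | succ b hab ih => exact (ih (by omega)).trans (hx (b + 1) (by omega) hb).le

lemma List.drop_dropLast_eq_take_drop (U : List α) {p : ℕ} (hp : 1 ≤ p) (hpU : p ≤ U.length) :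
    U.dropLast.drop (U.dropLast.length - (p - 1)) = (U.drop (U.length - p)).take (p - 1) := by
  rw [List.dropLast_eq_take, List.drop_take, List.length_take, min_eq_left (Nat.sub_le _ 1),
    show U.length - 1 - (p - 1) = U.length - p by omega,
    show U.length - 1 - (U.length - p) = p - 1 by omega]

namespace SCER

variable {r : List α → List α → Prop}

lemma rel_take (h : SCER r) {X Y : List α} (hXY : r X Y) (p : ℕ) : r (X.take p) (Y.take p) := by
  rcases Nat.eq_zero_or_pos p with rfl | hp
  · exact h.equiv.refl []
  rcases le_or_gt p X.length with hpX | hXp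
  · exact h.substr_congr X Y hXY 1 p le_rfl hp hpX
  · have hYp : Y.length ≤ p := h.length_eq X Y hXY ▸ hXp.le
    rwa [List.take_of_length_le hXp.le, List.take_of_length_le hYp]

lemma rel_take_pred_drop_dropLast (h : SCER r) {S U : List α} {p : ℕ} (hp : 1 ≤ p)
    (hpU : p ≤ U.length) (hr : r (S.take p) (U.drop (U.length - p))) :
    r (S.take (p - 1)) (U.dropLast.drop (U.dropLast.length - (p - 1))) := by
  have := h.rel_take hr (p - 1)
  rwa [List.take_take, min_eq_left (Nat.sub_le p 1),
    ← List.drop_dropLast_eq_take_drop U hp hpU] at this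

end SCER

namespace IsCover

variable {r : List α → List α → Prop} {C T : List α}

lemma rel_drop (hC : IsCover r C T) (hCT : C.length ≤ T.length) :
    r C (T.drop (T.length - C.length)) := by
  obtain ⟨m, x, hm, -, hxm, hocc, -⟩ := hC
  have hlast := hocc m hm le_rfl
  rwa [hxm, show T.length - C.length + 1 + C.length - 1 = T.length by omega, substr,
    List.take_length, show T.length - C.length + 1 - 1 = T.length - C.length by omega] at hlast

lemma exists_cover_take (hC : IsCover r C T) (hlt : C.length < T.length) :
    ∃ q < T.length, T.length ≤ q + C.length ∧ IsCover r C (T.take q) := by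
  obtain ⟨m, x, hm, hx1, hxm, hocc, hgap⟩ := hC
  have hm2 : 2 ≤ m := by
    by_contra! hm1
    obtain rfl : m = 1 := by omega
    omega
  have hmono : ∀ {a b}, 1 ≤ a → a ≤ b → b ≤ m → x a ≤ x b :=
    le_of_forall_pred_lt fun k hk hkm => (hgap k hk hkm).1
  have hlast := hgap m (by omega) le_rfl
  have hpos : 1 ≤ x (m - 1) := hx1 ▸ hmono le_rfl (by omega) (by omega)
  refine ⟨x (m - 1) + C.length - 1, by omega, by omega, m - 1, x, by omega, hx1, ?_, ?_, ?_⟩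
  · rw [List.length_take]
    omega
  · intro k hk hkm
    rw [substr_take_of_le_s19 T (by have := hmono hk hkm (Nat.sub_le m 1); omega)]
    exact hocc k hk (by omega)
  · exact fun k hk hkm => hgap k hk (by omega)

end IsCover

theorem IsLeftSeed.dropLast {r : List α → List α → Prop} (h : SCER r) {S U : List α}
    (hS : IsLeftSeed r S U) (hlt : S.length < U.length) : IsLeftSeed r S U.dropLast := by
  obtain ⟨k, l, hkl, hlS, hcov, hsuf⟩ := hS
  rcases Nat.eq_zero_or_pos k with rfl | hk
  · rw [Nat.sub_zero, List.take_length] at hcov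
    obtain ⟨q, hqU, hUq, hcovq⟩ := hcov.exists_cover_take hlt
    refine ⟨U.length - 1 - q, S.length - 1, by omega, by omega, ?_, ?_⟩
    · rwa [List.dropLast_eq_take, List.length_take, List.take_take, min_eq_left (by omega),
        min_eq_left (by omega), show U.length - 1 - (U.length - 1 - q) = q by omega]
    · apply h.rel_take_pred_drop_dropLast (by omega) hlt.le
      rw [List.take_length]
      exact hcov.rel_drop hlt.le
  · refine ⟨k - 1, l - 1, by omega, by omega, ?_,
      h.rel_take_pred_drop_dropLast (by omega) (by omega) hsuf⟩
    rwa [List.dropLast_eq_take, List.length_take, List.take_take, min_eq_left (by omega),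
      min_eq_left (by omega), show U.length - 1 - (k - 1) = U.length - k by omega]

theorem stmt19 (r : List α → List α → Prop) (h : SCER r) (T : List α) (i j : ℕ)
    (h1 : 1 ≤ i) (h2 : i ≤ T.length) (h3 : j ≤ i - 1)
    (hn : ¬ IsLeftSeed r (T.take j) (T.take (i - 1))) :
    ¬ IsLeftSeed r (T.take j) (T.take i) := by
  intro hS
  have hTi : (T.take i).dropLast = T.take (i - 1) := by
    rw [List.dropLast_eq_take, List.length_take, min_eq_left h2, List.take_take,
      min_eq_left (Nat.sub_le i 1)]
  refine hn (hTi ▸ hS.dropLast h ?_)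
  simp only [List.length_take]
  omega
end
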